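/- Let $m \geq 3$ and $N \geq 3$. Suppose $Y \in \mathbb{R}^{m\times N}$ satisfies $Y = Y^R + Y^F$, where $Y^R_{k,j} = E_k(1 - e^{-\sigma t_j})\sin(\omega_d t_j + \theta_k)$ for some common $\sigma, \omega_d \in \mathbb{R}$, row-dependent $E_k, \theta_k \in \mathbb{R}$, and sample times $t_1,\dots,t_N$, and $Y^F$ has at most one nonzero row. Then $\operatorname{rank}(Y) \leq 3$. -/
import Mathlib


lemma myrank_add_le {m n : ℕ} (A B : Matrix (Fin m) (Fin n) ℝ) :
    (A + B).rank ≤ A.rank + B.rank := by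
  unfold Matrix.rank
  rw [Matrix.mulVecLin_add]
  have h : LinearMap.range (A.mulVecLin + B.mulVecLin)
      ≤ LinearMap.range A.mulVecLin ⊔ LinearMap.range B.mulVecLin := by
    rintro x ⟨v, rfl⟩
    exact Submodule.add_mem_sup (LinearMap.mem_range_self _ v) (LinearMap.mem_range_self _ v)
  exact (Submodule.finrank_mono h).trans
    (Submodule.finrank_add_le_finrank_add_finrank _ _)

lemma myrank_vecMulVec_le {m n : ℕ} (u : Fin m → ℝ) (v : Fin n → ℝ) :
    (Matrix.vecMulVec u v).rank ≤ 1 := by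
  rw [Matrix.vecMulVec_eq Unit]
  exact (Matrix.rank_mul_le_left _ _).trans
    ((Matrix.rank_le_card_width _).trans (by simp))

theorem stmt_14 (m N : ℕ) (hm : 3 ≤ m) (hN : 3 ≤ N)
    (σ ωd : ℝ) (E θ : Fin m → ℝ) (t : Fin N → ℝ)
    (Y YR YF : Matrix (Fin m) (Fin N) ℝ)
    (hsum : Y = YR + YF)
    (hYR : ∀ k j, YR k j = E k * (1 - Real.exp (-σ * t j)) * Real.sin (ωd * t j + θ k))
    (hYF : ∃ k0 : Fin m, ∀ k, k ≠ k0 → ∀ j, YF k j = 0) :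
    Y.rank ≤ 3 := by
  obtain ⟨k0, hk0⟩ := hYF
  have hYRdec : YR = Matrix.vecMulVec (fun k => E k * Real.cos (θ k))
      (fun j => (1 - Real.exp (-σ * t j)) * Real.sin (ωd * t j))
      + Matrix.vecMulVec (fun k => E k * Real.sin (θ k))
      (fun j => (1 - Real.exp (-σ * t j)) * Real.cos (ωd * t j)) := by
    ext k j
    simp only [Matrix.add_apply, Matrix.vecMulVec_apply, hYR, Real.sin_add]
    ring
  have hYFdec : YF = Matrix.vecMulVec (fun k => if k = k0 then (1:ℝ) else 0)
      (fun j => YF k0 j) := by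
    ext k j
    simp only [Matrix.vecMulVec_apply]
    by_cases h : k = k0
    · simp [h]
    · simp [h, hk0 k h j]
  calc Y.rank ≤ YR.rank + YF.rank := hsum ▸ myrank_add_le YR YF
    _ ≤ 2 + 1 := by
        gcongr
        · rw [hYRdec]
          calc _ ≤ (Matrix.vecMulVec (fun k => E k * Real.cos (θ k))
              (fun j => (1 - Real.exp (-σ * t j)) * Real.sin (ωd * t j))).rank
              + (Matrix.vecMulVec (fun k => E k * Real.sin (θ k))
              (fun j => (1 - Real.exp (-σ * t j)) * Real.cos (ωd * t j))).rank :=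
              myrank_add_le _ _
            _ ≤ 1 + 1 := add_le_add (myrank_vecMulVec_le _ _) (myrank_vecMulVec_le _ _)
        · rw [hYFdec]; exact myrank_vecMulVec_le _ _
    _ = 3 := rfl
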